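/- If G is a simple graph with vertex set of cardinality n, then the number of maximal independent sets of G is at most 3^{n/3}, i.e., (number of maximal independent sets of G)^3 ≤ 3^n. -/

import Mathlib

open Set Finset

/-- The set of maximal independent sets of `G`. -/
def misSet {V : Type*} (G : SimpleGraph V) : Set (Set V) :=
  {S : Set V | S.Pairwise (fun a b => ¬ G.Adj a b) ∧
      ∀ T : Set V, S ⊆ T → T.Pairwise (fun a b => ¬ G.Adj a b) → T = S}

lemma cube_le_three_pow (k : ℕ) : k ^ 3 ≤ 3 ^ k := by
  induction k with
  | zero => norm_num
  | succ n ih =>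
    rcases Nat.lt_or_ge n 3 with h | h
    · interval_cases n <;> norm_num
    · have ha : 3 * n ^ 2 ≤ n ^ 3 := by nlinarith
      have hb : 3 * n + 1 ≤ n ^ 3 := by nlinarith
      have h1 : (n + 1) ^ 3 ≤ 3 * n ^ 3 := by nlinarith
      calc (n + 1) ^ 3 ≤ 3 * n ^ 3 := h1
        _ ≤ 3 * 3 ^ n := by exact Nat.mul_le_mul_left 3 ih
        _ = 3 ^ (n + 1) := by ring

lemma ncard_biUnion_le' {α β : Type*} (t : Finset α) (f : α → Set β)
    (_hf : ∀ a, (f a).Finite) :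
    (⋃ a ∈ t, f a).ncard ≤ ∑ a ∈ t, (f a).ncard := by
  classical
  induction t using Finset.induction with
  | empty => simp
  | insert _ _ hx ih =>
    rename_i a s
    rw [Finset.set_biUnion_insert, Finset.sum_insert hx]
    exact le_trans (Set.ncard_union_le _ _) (Nat.add_le_add_left ih _)

/-- Transfer lemma: maximal independent sets containing `u` inject into
maximal independent sets of the graph induced on the non-closed-neighborhood of `u`. -/
lemma misSet_transfer {V : Type*} [Fintype V] (G : SimpleGraph V) (u : V)
    (s : Set V) (hs : ∀ w, w ∈ s ↔ ¬ G.Adj u w ∧ w ≠ u) :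
    {S ∈ misSet G | u ∈ S}.ncard ≤ (misSet (G.induce s)).ncard := by
  classical
  have key : ∀ S ∈ misSet G, u ∈ S →
      S = (fun (w : s) => (w : V)) '' {w : s | (w : V) ∈ S} ∪ {u} := by
    rintro S ⟨hpair, _⟩ huS
    ext x
    constructor
    · intro hxS
      by_cases hxu : x = u
      · exact Or.inr (by simp [hxu])
      · have hadj : ¬ G.Adj u x := hpair huS hxS (fun h => hxu h.symm)
        exact Or.inl ⟨⟨x, (hs x).mpr ⟨hadj, hxu⟩⟩, hxS, rfl⟩
    · rintro (⟨w, hw, rfl⟩ | hx)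
      · exact hw
      · simp only [Set.mem_singleton_iff] at hx; subst hx; exact huS
  apply Set.ncard_le_ncard_of_injOn (fun S => {w : s | (w : V) ∈ S})
  · rintro S ⟨⟨hpair, hmax⟩, huS⟩
    constructor
    · rintro ⟨a, ha⟩ haS ⟨b, hb⟩ hbS hne
      have hab : a ≠ b := fun h => hne (Subtype.ext h)
      exact hpair haS hbS hab
    · intro T' hsub hT'
      have hTpair : ((fun (w : s) => (w : V)) '' T' ∪ {u}).Pairwise
          (fun a b => ¬ G.Adj a b) := by
        rintro x (⟨a, haT, rfl⟩ | hx) y (⟨b, hbT, rfl⟩ | hy) hne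
        · exact hT' haT hbT (fun h => hne (congrArg _ h))
        · simp only [Set.mem_singleton_iff] at hy; subst hy
          intro hadj
          exact (((hs a).mp a.2).1) (G.adj_symm hadj)
        · simp only [Set.mem_singleton_iff] at hx; subst hx
          intro hadj
          exact (((hs b).mp b.2).1) hadj
        · simp only [Set.mem_singleton_iff] at hx hy; subst hx; subst hy
          exact absurd rfl hne
      have hSsub : S ⊆ (fun (w : s) => (w : V)) '' T' ∪ {u} := by
        rw [key S ⟨hpair, hmax⟩ huS]
        apply Set.union_subset_union_left
        exact Set.image_mono hsub
      have hEq := hmax _ hSsub hTpair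
      ext ⟨w, hw⟩
      constructor
      · intro hwT
        have : (w : V) ∈ (fun (w : s) => (w : V)) '' T' ∪ {u} :=
          Or.inl ⟨⟨w, hw⟩, hwT, rfl⟩
        rw [hEq] at this
        exact this
      · exact fun h => hsub h
  · rintro S1 ⟨hS1, hu1⟩ S2 ⟨hS2, hu2⟩ hEq
    rw [key S1 hS1 hu1, key S2 hS2 hu2,
      show {w : s | (w : V) ∈ S1} = {w : s | (w : V) ∈ S2} from hEq]

/-- Every maximal independent set meets the closed neighborhood of any vertex. -/
lemma misSet_meets {V : Type*} (G : SimpleGraph V) (v : V) (S : Set V)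
    (hS : S ∈ misSet G) : ∃ u, (u = v ∨ G.Adj v u) ∧ u ∈ S := by
  obtain ⟨hpair, hmax⟩ := hS
  by_cases hv : v ∈ S
  · exact ⟨v, Or.inl rfl, hv⟩
  by_cases hn : ∃ u, G.Adj v u ∧ u ∈ S
  · obtain ⟨u, h1, h2⟩ := hn
    exact ⟨u, Or.inr h1, h2⟩
  push_neg at hn
  exfalso
  have hpair' : (S ∪ {v}).Pairwise (fun a b => ¬ G.Adj a b) := by
    rintro x (hx | hx) y (hy | hy) hne
    · exact hpair hx hy hne
    · simp only [Set.mem_singleton_iff] at hy; subst hy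
      intro hadj; exact hn x (G.adj_symm hadj) hx
    · simp only [Set.mem_singleton_iff] at hx; subst hx
      intro hadj; exact hn y hadj hy
    · simp only [Set.mem_singleton_iff] at hx hy; subst hx; subst hy
      exact absurd rfl hne
  have := hmax (S ∪ {v}) Set.subset_union_left hpair'
  apply hv
  rw [← this]
  exact Or.inr rfl

lemma misSet_card_key (n : ℕ) : ∀ {V : Type*} [Fintype V] (G : SimpleGraph V),
    Fintype.card V = n → (misSet G).ncard ^ 3 ≤ 3 ^ n := by
  induction n using Nat.strong_induction_on with
  | _ n ih =>
  intro V _ G hn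
  classical
  rcases Nat.eq_zero_or_pos n with h0 | hpos
  · subst h0
    have : IsEmpty V := Fintype.card_eq_zero_iff.mp hn
    have hsub : misSet G ⊆ {(∅ : Set V)} := by
      intro S _
      simp only [Set.mem_singleton_iff]
      ext x; exact (this.false x).elim
    calc (misSet G).ncard ^ 3 ≤ ({(∅ : Set V)} : Set (Set V)).ncard ^ 3 :=
          Nat.pow_le_pow_left (Set.ncard_le_ncard hsub (Set.toFinite _)) 3
      _ ≤ 3 ^ 0 := by simp
  · have hV : Nonempty V := Fintype.card_pos_iff.mp (hn ▸ hpos)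
    -- choose a vertex of minimum degree
    obtain ⟨v, -, hvmin⟩ := Finset.exists_min_image Finset.univ (fun u => G.degree u)
      ⟨hV.some, Finset.mem_univ _⟩
    set d := G.degree v with hd
    -- closed neighborhood finset
    set t : Finset V := insert v (G.neighborFinset v) with ht
    have htcard : t.card = d + 1 := by
      rw [ht, Finset.card_insert_of_notMem (by simp), G.card_neighborFinset_eq_degree]
    have hd_le : d + 1 ≤ n := by
      have := G.degree_lt_card_verts v
      omega
    -- the non-closed-neighborhood of u, as a set
    let sfun : V → Set V := fun u => ↑((insert u (G.neighborFinset u))ᶜ)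
    have hsmem : ∀ u w, w ∈ sfun u ↔ ¬ G.Adj u w ∧ w ≠ u := by
      intro u w
      simp only [sfun, Finset.coe_compl, Set.mem_compl_iff, Finset.coe_insert,
        Set.mem_insert_iff, Finset.mem_coe, SimpleGraph.mem_neighborFinset]
      tauto
    have hscard : ∀ u, Fintype.card (sfun u) = n - (G.degree u + 1) := by
      intro u
      have : Fintype.card (sfun u) = ((insert u (G.neighborFinset u))ᶜ).card := by
        simp only [sfun]
        rw [← Set.toFinset_card, Finset.toFinset_coe]
      rw [this, Finset.card_compl, Finset.card_insert_of_notMem (by simp),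
        G.card_neighborFinset_eq_degree, hn]
    -- cover
    have hcover : misSet G ⊆ ⋃ u ∈ t, {S ∈ misSet G | u ∈ S} := by
      intro S hS
      obtain ⟨u, hu, huS⟩ := misSet_meets G v S hS
      refine Set.mem_biUnion ?_ ⟨hS, huS⟩
      rcases hu with rfl | hadj
      · exact Finset.mem_insert_self _ _
      · exact Finset.mem_insert_of_mem (by simpa using hadj)
    -- bound each piece
    have hpiece : ∀ u ∈ t, {S ∈ misSet G | u ∈ S}.ncard ^ 3 ≤ 3 ^ (n - (d + 1)) := by
      intro u hu
      have hdu : d ≤ G.degree u := hvmin u (Finset.mem_univ u)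
      have h1 := misSet_transfer G u (sfun u) (hsmem u)
      have h2 := ih (n - (G.degree u + 1)) (by omega) (G.induce (sfun u)) (hscard u)
      calc {S ∈ misSet G | u ∈ S}.ncard ^ 3
          ≤ (misSet (G.induce (sfun u))).ncard ^ 3 := Nat.pow_le_pow_left h1 3
        _ ≤ 3 ^ (n - (G.degree u + 1)) := h2
        _ ≤ 3 ^ (n - (d + 1)) := Nat.pow_le_pow_right (by norm_num) (by omega)
    -- sum up
    have hsum : (misSet G).ncard ≤ ∑ u ∈ t, {S ∈ misSet G | u ∈ S}.ncard := by
      calc (misSet G).ncard ≤ (⋃ u ∈ t, {S ∈ misSet G | u ∈ S}).ncard :=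
            Set.ncard_le_ncard hcover (Set.toFinite _)
        _ ≤ _ := ncard_biUnion_le' t _ (fun a => Set.toFinite _)
    -- max element
    have htne : t.Nonempty := ⟨v, Finset.mem_insert_self _ _⟩
    obtain ⟨u0, hu0t, hu0⟩ := Finset.exists_mem_eq_sup t htne
      (fun u => {S ∈ misSet G | u ∈ S}.ncard)
    set A := {S ∈ misSet G | u0 ∈ S}.ncard with hA
    have hsumA : ∑ u ∈ t, {S ∈ misSet G | u ∈ S}.ncard ≤ t.card * A := by
      apply Finset.sum_le_card_nsmul
      intro u hu
      have hle := Finset.le_sup (f := fun u => {S ∈ misSet G | u ∈ S}.ncard) hu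
      rw [hu0] at hle
      exact hle
    have hA3 : A ^ 3 ≤ 3 ^ (n - (d + 1)) := hpiece u0 hu0t
    calc (misSet G).ncard ^ 3 ≤ (t.card * A) ^ 3 :=
          Nat.pow_le_pow_left (le_trans hsum hsumA) 3
      _ = t.card ^ 3 * A ^ 3 := by ring
      _ ≤ 3 ^ (d + 1) * 3 ^ (n - (d + 1)) := by
          apply Nat.mul_le_mul
          · rw [htcard]; exact cube_le_three_pow (d + 1)
          · exact hA3
      _ = 3 ^ n := by rw [← pow_add]; congr 1; omega

/-- Moon–Moser bound: the number of maximal independent sets of a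
finite simple graph on `n` vertices, cubed, is at most `3 ^ n`. -/
theorem stmt13 {V : Type*} [Fintype V] (G : SimpleGraph V) :
    ({S : Set V | S.Pairwise (fun a b => ¬ G.Adj a b) ∧
        ∀ T : Set V, S ⊆ T → T.Pairwise (fun a b => ¬ G.Adj a b) → T = S}).ncard ^ 3
      ≤ 3 ^ Fintype.card V := by
  exact misSet_card_key (Fintype.card V) G rfl
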